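/- Let H(x,y) = y²/2 + x²/2 + x⁴/4 and suppose λ₁ + λ₂x² + λ₃y² + λ₄x⁴ + λ₅y⁴ + λ₆x⁶ is such that the 1-form ω = (λ₁ + λ₂x² + λ₃y² + λ₄x⁴ + λ₅y⁴ + λ₆x⁶)·y dx has ∮_{H=h} ω = 0 for all h > 0. Then λ₁ = λ₅ = λ₆ = 0, λ₂ + 3λ₃ = 0 and λ₄ + 3λ₃ = 0; equivalently ω = λ₃·(−3x² + y² − 3x⁴)·y dx = λ₃·(−3xy·dH + d(xy³)), i.e. ω is relatively exact. -/

import Mathlib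

/-!
Parametrize the ovals by the square `t` of their `x`-intercept, `h = t/2 + t²/4`, and
rescale `x = √t v`. Integrating `d(x y³) = y³ dx - 3(x² + x⁴) y dx` over the oval gives
`∮ y³ dx = 3 ∮ (x² + x⁴) y dx`, which removes the `y²` term. The abelian integral then equals
`t √t ∑ₖ cₖ tᵏ mₖ(1/t)` with `c = (λ₁, λ₂ + 3λ₃, λ₄ + 3λ₃, λ₆, λ₅)`, where the rescaled
moments `mₖ` are continuous at `0` with positive values there. Since the powers `tᵏ` grow
at different rates as `t → ∞`, every `cₖ` vanishes.
-/

/-- For the global center `H = y²/2 + x²/2 + x⁴/4` and `h > 0`, the oval `{H = h}` is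
`y² = 2h − x² − x⁴/2`, `|x| ≤ a h` where `a h` is its positive root. -/
noncomputable def a (h : ℝ) : ℝ := Real.sqrt (-1 + Real.sqrt (1 + 4*h))

/-- the positive branch `y(x, h)` of the oval `{H = h}` -/
noncomputable def yv (h x : ℝ) : ℝ := Real.sqrt (2*h - x^2 - x^4/2)

open Filter Topology Set

theorem eq_zero_of_eventually_sum_mul_pow_mul_eq_zero {n : ℕ} {c : Fin n → ℝ}
    {f : Fin n → ℝ → ℝ} {L : Fin n → ℝ} (hf : ∀ k, Tendsto (f k) atTop (𝓝 (L k)))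
    (hL : ∀ k, L k ≠ 0) (h : ∀ᶠ t in atTop, ∑ k, c k * t ^ (k : ℕ) * f k t = 0) :
    c = 0 := by
  induction n with
  | zero => exact Subsingleton.elim _ _
  | succ n ih =>
    simp only [Fin.sum_univ_castSucc, Fin.val_castSucc, Fin.val_last] at h
    have hlower : Tendsto (fun t => (∑ k : Fin n, c k.castSucc * t ^ (k : ℕ) * f k.castSucc t)
        / t ^ n) atTop (𝓝 0) := by
      simp only [Finset.sum_div]
      rw [← Finset.sum_const_zero (s := (Finset.univ : Finset (Fin n)))]
      refine tendsto_finsetSum _ fun k _ => ?_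
      have := ((tendsto_pow_div_pow_atTop_zero k.isLt).const_mul (c k.castSucc)).mul
        (hf k.castSucc)
      simp only [mul_zero, zero_mul] at this
      exact this.congr fun t => by ring
    have htop : Tendsto (fun t => c (Fin.last n) * f (Fin.last n) t) atTop (𝓝 0) := by
      refine (neg_zero (G := ℝ) ▸ hlower.neg).congr' ?_
      filter_upwards [h, eventually_gt_atTop 0] with t ht htpos
      rw [← neg_div, div_eq_iff (by positivity)]
      linear_combination -ht
    have hlast : c (Fin.last n) = 0 := by
      have := tendsto_nhds_unique ((hf _).const_mul (c (Fin.last n))) htop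
      exact (mul_eq_zero.mp this).resolve_right (hL _)
    have hinit := ih (c := fun k => c k.castSucc) (fun k => hf k.castSucc)
      (fun k => hL k.castSucc) (by simpa [hlast] using h)
    funext k
    induction k using Fin.lastCases with
    | last => exact hlast
    | cast k => exact congrFun hinit k

/-- On the oval through `(√t, 0)`, i.e. `h = t/2 + t²/4`, the upper branch is
`yv h (√t * v) = t * ovalProfile t⁻¹ v` (see `yv_sqrt_mul`). -/
noncomputable def ovalProfile (s v : ℝ) : ℝ := √((1 - v ^ 2) * (1 + v ^ 2 + 2 * s) / 2)

noncomputable def ovalMoment (i j : ℕ) (s : ℝ) : ℝ :=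
  ∫ v in (-1)..1, v ^ i * ovalProfile s v ^ j

theorem continuous_ovalMoment (i j : ℕ) : Continuous (ovalMoment i j) :=
  intervalIntegral.continuous_parametric_intervalIntegral_of_continuous'
    (by unfold ovalProfile; fun_prop) _ _

theorem ovalMoment_pos {i : ℕ} (hi : Even i) (j : ℕ) : 0 < ovalMoment i j 0 := by
  refine intervalIntegral.integral_pos (by norm_num)
    (by unfold ovalProfile; fun_prop) (fun v _ => ?_) ⟨1 / 2, by norm_num, ?_⟩
  · exact mul_nonneg (hi.pow_nonneg v) (pow_nonneg (Real.sqrt_nonneg _) j)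
  · unfold ovalProfile; positivity

theorem integral_sum_mul_ovalMoment {n : ℕ} (s : ℝ) (c : Fin n → ℝ) (i j : Fin n → ℕ) :
    ∫ v in (-1)..1, ∑ k, c k * (v ^ i k * ovalProfile s v ^ j k) =
      ∑ k, c k * ovalMoment (i k) (j k) s := by
  rw [intervalIntegral.integral_finsetSum fun k _ =>
    (by unfold ovalProfile; fun_prop : Continuous _).intervalIntegrable _ _]
  simp only [intervalIntegral.integral_const_mul, ovalMoment]

theorem hasDerivAt_mul_ovalProfile_pow_three {s v : ℝ} (hs : 0 ≤ s) (hv : v ∈ Ioo (-1) 1) :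
    HasDerivAt (fun v => v * ovalProfile s v ^ 3)
      (ovalProfile s v ^ 3 - 3 * (v ^ 4 + s * v ^ 2) * ovalProfile s v) v := by
  have hv2 : v ^ 2 < 1 := by nlinarith [hv.1, hv.2]
  have hQ : 0 < (1 - v ^ 2) * (1 + v ^ 2 + 2 * s) / 2 := by
    have : 0 < 1 - v ^ 2 := by linarith
    positivity
  have hP : HasDerivAt (ovalProfile s) ((-2 * v ^ 3 - 2 * s * v) / (2 * ovalProfile s v)) v := by
    have hQ' : HasDerivAt (fun v => (1 - v ^ 2) * (1 + v ^ 2 + 2 * s) / 2)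
        (-2 * v ^ 3 - 2 * s * v) v := by
      refine ((((hasDerivAt_pow 2 v).const_sub 1).fun_mul
        (((hasDerivAt_pow 2 v).const_add 1).add_const (2 * s))).div_const 2).congr_deriv ?_
      push_cast
      ring
    exact hQ'.sqrt hQ.ne'
  refine ((hasDerivAt_id' v).fun_mul (hP.fun_pow 3)).congr_deriv ?_
  have hP0 : ovalProfile s v ≠ 0 := Real.sqrt_ne_zero'.mpr hQ
  field_simp
  ring

/-- The rescaled form of `∮ y³ dx = 3 ∮ (x² + x⁴) y dx`, obtained by integrating `d(x y³)`. -/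
theorem ovalMoment_zero_three {s : ℝ} (hs : 0 ≤ s) :
    ovalMoment 0 3 s = 3 * (ovalMoment 4 1 s + s * ovalMoment 2 1 s) := by
  have hftc := intervalIntegral.integral_eq_sub_of_hasDerivAt_of_le (by norm_num)
    (by unfold ovalProfile; fun_prop) (fun v hv => hasDerivAt_mul_ovalProfile_pow_three hs hv)
    (by unfold ovalProfile; exact (by fun_prop : Continuous _).intervalIntegrable _ _)
  have hsum := integral_sum_mul_ovalMoment s ![1, -3, -3 * s] ![0, 4, 2] ![3, 1, 1]
  simp only [Fin.sum_univ_three, Matrix.cons_val] at hsum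
  have hends : ovalProfile s 1 = 0 ∧ ovalProfile s (-1) = 0 := by simp [ovalProfile]
  have := hftc.symm.trans ((intervalIntegral.integral_congr fun v _ => by ring).trans hsum)
  rw [hends.1, hends.2] at this
  linear_combination -this

theorem a_eq_sqrt {t : ℝ} (ht : 0 ≤ t) : a (t / 2 + t ^ 2 / 4) = √t := by
  rw [a, show 1 + 4 * (t / 2 + t ^ 2 / 4) = (1 + t) ^ 2 by ring, Real.sqrt_sq (by linarith)]
  ring_nf

theorem yv_sqrt_mul {t : ℝ} (ht : 0 < t) (v : ℝ) :
    yv (t / 2 + t ^ 2 / 4) (√t * v) = t * ovalProfile t⁻¹ v := by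
  have hs : √t ^ 2 = t := Real.sq_sqrt ht.le
  have hq : 2 * (t / 2 + t ^ 2 / 4) - (√t * v) ^ 2 - (√t * v) ^ 4 / 2 =
      t ^ 2 * ((1 - v ^ 2) * (1 + v ^ 2 + 2 * t⁻¹) / 2) := by
    have hs4 : √t ^ 4 = t ^ 2 := by rw [show 4 = 2 * 2 from rfl, pow_mul, hs]
    rw [mul_pow, mul_pow, hs, hs4]
    field_simp
    ring
  rw [yv, ovalProfile, hq, Real.sqrt_mul (sq_nonneg t), Real.sqrt_sq ht.le]

theorem integral_oval_eq_ovalMoment {t : ℝ} (ht : 0 < t) (l₁ l₂ l₃ l₄ l₅ l₆ : ℝ) :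
    (∫ x in (-(a (t / 2 + t ^ 2 / 4)))..(a (t / 2 + t ^ 2 / 4)),
      (l₁ + l₂ * x ^ 2 + l₃ * (yv (t / 2 + t ^ 2 / 4) x) ^ 2 + l₄ * x ^ 4
        + l₅ * (yv (t / 2 + t ^ 2 / 4) x) ^ 4 + l₆ * x ^ 6) * yv (t / 2 + t ^ 2 / 4) x) =
      t * √t * (l₁ * ovalMoment 0 1 t⁻¹ + l₂ * t * ovalMoment 2 1 t⁻¹
        + l₃ * t ^ 2 * ovalMoment 0 3 t⁻¹ + l₄ * t ^ 2 * ovalMoment 4 1 t⁻¹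
        + l₅ * t ^ 4 * ovalMoment 0 5 t⁻¹ + l₆ * t ^ 3 * ovalMoment 6 1 t⁻¹) := by
  have hs : √t ^ 2 = t := Real.sq_sqrt ht.le
  have hsub := intervalIntegral.smul_integral_comp_mul_left (a := -1) (b := 1) (fun x =>
    (l₁ + l₂ * x ^ 2 + l₃ * (yv (t / 2 + t ^ 2 / 4) x) ^ 2 + l₄ * x ^ 4
      + l₅ * (yv (t / 2 + t ^ 2 / 4) x) ^ 4 + l₆ * x ^ 6) * yv (t / 2 + t ^ 2 / 4) x) (√t)
  rw [mul_neg_one, mul_one] at hsub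
  have hsum := integral_sum_mul_ovalMoment t⁻¹
    ![t * l₁, t ^ 2 * l₂, t ^ 3 * l₃, t ^ 3 * l₄, t ^ 5 * l₅, t ^ 4 * l₆]
    ![0, 2, 0, 4, 0, 6] ![1, 1, 3, 1, 5, 1]
  simp only [Fin.sum_univ_six, Matrix.cons_val] at hsum
  rw [a_eq_sqrt ht.le, ← hsub, smul_eq_mul,
    (intervalIntegral.integral_congr fun v _ => ?_).trans hsum]
  · ring
  · have hs4 : √t ^ 4 = t ^ 2 := by rw [show 4 = 2 * 2 from rfl, pow_mul, hs]
    have hs6 : √t ^ 6 = t ^ 3 := by rw [show 6 = 2 * 3 from rfl, pow_mul, hs]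
    simp only [yv_sqrt_mul ht, mul_pow, hs, hs4, hs6]
    ring

/-- If `ω = (λ₁ + λ₂x² + λ₃y² + λ₄x⁴ + λ₅y⁴ + λ₆x⁶)·y dx` satisfies `∮_{H=h} ω = 0`
for all `h > 0`, then `λ₁ = λ₅ = λ₆ = 0`, `λ₂ + 3λ₃ = 0` and `λ₄ + 3λ₃ = 0`
(so that `ω = λ₃(−3x² + y² − 3x⁴) y dx` is relatively exact). -/
theorem center_conditions (l₁ l₂ l₃ l₄ l₅ l₆ : ℝ)
    (hvan : ∀ h : ℝ, 0 < h →
      (∫ x in (-(a h))..(a h),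
        (l₁ + l₂*x^2 + l₃*(yv h x)^2 + l₄*x^4 + l₅*(yv h x)^4 + l₆*x^6) * yv h x) = 0) :
    l₁ = 0 ∧ l₅ = 0 ∧ l₆ = 0 ∧ l₂ + 3*l₃ = 0 ∧ l₄ + 3*l₃ = 0 := by
  set i : Fin 5 → ℕ := ![0, 2, 4, 6, 0]
  set j : Fin 5 → ℕ := ![1, 1, 1, 1, 5]
  have hmoments : ∀ᶠ t in atTop, ∑ k, ![l₁, l₂ + 3 * l₃, l₄ + 3 * l₃, l₆, l₅] k * t ^ (k : ℕ)
      * ovalMoment (i k) (j k) t⁻¹ = 0 := by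
    filter_upwards [eventually_gt_atTop 0] with t ht
    have h := hvan (t / 2 + t ^ 2 / 4) (by positivity)
    rw [integral_oval_eq_ovalMoment ht, ovalMoment_zero_three (inv_nonneg.mpr ht.le),
      mul_eq_zero, or_iff_right (by positivity)] at h
    simp only [Fin.sum_univ_five, Matrix.cons_val, i, j, Fin.coe_ofNat_eq_mod]
    linear_combination h - 3 * l₃ * t * ovalMoment 2 1 t⁻¹ * mul_inv_cancel₀ ht.ne'
  have hc := eq_zero_of_eventually_sum_mul_pow_mul_eq_zero
    (fun k => ((continuous_ovalMoment (i k) (j k)).tendsto 0).comp tendsto_inv_atTop_zero)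
    (fun k => (ovalMoment_pos (by fin_cases k <;> decide) (j k)).ne') hmoments
  exact ⟨congrFun hc 0, congrFun hc 4, congrFun hc 3, congrFun hc 1, congrFun hc 2⟩
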